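/- For every q with 2 < q < ∞ there exists a finite constant C = C(q) > 0 such that ‖T(f₁,f₂)‖_1 ≤ C ‖f₁‖_q ‖f₂‖_1 for all nonnegative measurable functions f₁, f₂ on ℝ; that is, in dimension n = 2 the bilinear spherical average T is of strong type at every point (1/q, 1; 1) of the open line segment CP. -/

import Mathlib

open MeasureTheory ENNReal

/-- The `L^p` "norm" (with respect to Lebesgue measure on `ℝ`) of an
`ℝ≥0∞`-valued function, with the convention for `p = ∞`. -/
noncomputable def lpNorm (p : ℝ≥0∞) (g : ℝ → ℝ≥0∞) : ℝ≥0∞ :=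
  if p = ∞ then essSup g (volume : Measure ℝ)
  else (∫⁻ x, g x ^ p.toReal) ^ (1 / p.toReal)

/-- The bilinear spherical average in dimension `n = 2`:
`T(f₁,f₂)(x) = (1/(2π)) ∫₀^{2π} f₁(x − cos t) f₂(x − sin t) dt`. -/
noncomputable def T2 (f₁ f₂ : ℝ → ℝ) (x : ℝ) : ℝ≥0∞ :=
  (ENNReal.ofReal (2 * Real.pi))⁻¹ *
    ∫⁻ t in Set.Ioc 0 (2 * Real.pi),
      ENNReal.ofReal (f₁ (x - Real.cos t)) * ENNReal.ofReal (f₂ (x - Real.sin t))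

/-!
By Tonelli and the substitution `x ↦ x + sin t`, the integral of `T(f₁, f₂)` equals
`(2π)⁻¹ ∫ f₂(x) ∫₀^{2π} f₁(x + φ t) dt dx` with `φ = sin - cos`. For fixed `x`, split
`f₁(x + φ) = (|φ'|^{1/q} f₁(x + φ)) · |φ'|^{-1/q}` and apply Hölder. As `φ` is injective on
three arcs covering `(0, 2π]`, the first factor is at most `3^{1/q} ‖f₁‖_q`; the second is finite
since `φ' = √2 sin(· + π/4)` and `|sin|^{1-q'}` is integrable exactly when `q' < 2`, i.e. `q > 2`.
-/

open Real Set

theorem ENNReal.rpow_le_rpow_of_nonpos {x y : ℝ≥0∞} {z : ℝ} (hz : z ≤ 0) (h : x ≤ y) :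
    y ^ z ≤ x ^ z := by
  obtain ⟨w, rfl⟩ : ∃ w, z = -w := ⟨-z, (neg_neg z).symm⟩
  rw [ENNReal.rpow_neg, ENNReal.rpow_neg]
  exact ENNReal.inv_le_inv.2 (ENNReal.rpow_le_rpow h (neg_nonpos.1 hz))

theorem lpNorm_one_eq_lintegral (g : ℝ → ℝ≥0∞) : lpNorm 1 g = ∫⁻ x, g x := by
  simp [_root_.lpNorm]

theorem lpNorm_ofReal_eq_lintegral_rpow {p : ℝ} (hp : 0 < p) (g : ℝ → ℝ≥0∞) :
    lpNorm (ENNReal.ofReal p) g = (∫⁻ x, g x ^ p) ^ (1 / p) := by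
  rw [_root_.lpNorm, if_neg ENNReal.ofReal_ne_top, ENNReal.toReal_ofReal hp.le]

theorem setLIntegral_Ioc_eq_add_add (f : ℝ → ℝ≥0∞) {a b c d : ℝ} (hab : a ≤ b) (hbc : b ≤ c)
    (hcd : c ≤ d) :
    ∫⁻ x in Ioc a d, f x =
      (∫⁻ x in Ioc a b, f x) + (∫⁻ x in Ioc b c, f x) + ∫⁻ x in Ioc c d, f x := by
  rw [← Ioc_union_Ioc_eq_Ioc (hab.trans hbc) hcd,
    lintegral_union measurableSet_Ioc (Ioc_disjoint_Ioc_of_le le_rfl),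
    ← Ioc_union_Ioc_eq_Ioc hab hbc,
    lintegral_union measurableSet_Ioc (Ioc_disjoint_Ioc_of_le le_rfl)]

theorem setLIntegral_abs_deriv_mul_comp_le {s : Set ℝ} {f f' : ℝ → ℝ} (hs : MeasurableSet s)
    (hf' : ∀ x ∈ s, HasDerivWithinAt f (f' x) s x) (hf : InjOn f s) (g : ℝ → ℝ≥0∞) :
    ∫⁻ x in s, ENNReal.ofReal |f' x| * g (f x) ≤ ∫⁻ y, g y :=
  (lintegral_image_eq_lintegral_abs_deriv_mul hs hf' hf g).symm.trans_le
    (setLIntegral_le_lintegral _ _)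

theorem setLIntegral_Ioc_comp_add_right (g : ℝ → ℝ≥0∞) (a b c : ℝ) :
    ∫⁻ t in Ioc a b, g (t + c) = ∫⁻ u in Ioc (a + c) (b + c), g u := by
  have h := lintegral_image_eq_lintegral_abs_deriv_mul (s := Ioc a b) (f := (· + c))
    measurableSet_Ioc (fun t _ => ((hasDerivAt_id t).add_const c).hasDerivWithinAt)
    (add_left_injective c).injOn g
  simpa [Set.image_add_const_Ioc] using h.symm

theorem setLIntegral_Ioc_comp_const_sub (g : ℝ → ℝ≥0∞) (a b c : ℝ) :
    ∫⁻ t in Ioc a b, g (c - t) = ∫⁻ u in Ico (c - b) (c - a), g u := by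
  have h := lintegral_image_eq_lintegral_abs_deriv_mul (s := Ioc a b) (f := (c - ·))
    measurableSet_Ioc (fun t _ => ((hasDerivAt_id t).const_sub c).hasDerivWithinAt)
    sub_right_injective.injOn g
  simpa [Set.image_const_sub_Ioc] using h.symm

theorem injOn_of_hasDerivAt_ne_zero {f f' : ℝ → ℝ} {D : Set ℝ} (hD : Convex ℝ D)
    (hf : ∀ x, HasDerivAt f (f' x) x) (hf' : ∀ x ∈ interior D, f' x ≠ 0) : InjOn f D := by
  have hcont : ContinuousOn f D := fun x _ => (hf x).continuousAt.continuousWithinAt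
  have hderiv : ∀ x ∈ interior D, HasDerivWithinAt f (f' x) (interior D) x :=
    fun x _ => (hf x).hasDerivWithinAt
  rcases hasDerivWithinAt_forall_lt_or_forall_gt_of_forall_ne hD.interior hderiv hf' with
    hneg | hpos
  · exact (strictAntiOn_of_hasDerivWithinAt_neg hD hcont hderiv hneg).injOn
  · exact (strictMonoOn_of_hasDerivWithinAt_pos hD hcont hderiv hpos).injOn

theorem lintegral_le_weighted_Lp_mul_Lq {α : Type*} [MeasurableSpace α] (μ : Measure α)
    {p q : ℝ} (hpq : p.HolderConjugate q) {G W : α → ℝ≥0∞} (hG : AEMeasurable G μ)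
    (hW : AEMeasurable W μ) (hW0 : ∀ᵐ x ∂μ, W x ≠ 0) (hWtop : ∀ᵐ x ∂μ, W x ≠ ∞) :
    ∫⁻ x, G x ∂μ ≤ (∫⁻ x, W x * G x ^ p ∂μ) ^ (1 / p) * (∫⁻ x, W x ^ (1 - q) ∂μ) ^ (1 / q) := by
  have hsplit : ∀ᵐ x ∂μ, G x = (W x ^ (1 / p) * G x) * W x ^ (-(1 / p)) := by
    filter_upwards [hW0, hWtop] with x h0 htop
    rw [mul_right_comm, ← ENNReal.rpow_add _ _ h0 htop, add_neg_cancel, ENNReal.rpow_zero,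
      one_mul]
  have hfirst : ∀ x, (W x ^ (1 / p) * G x) ^ p = W x * G x ^ p := fun x => by
    rw [ENNReal.mul_rpow_of_nonneg _ _ hpq.nonneg, ← ENNReal.rpow_mul,
      one_div_mul_cancel hpq.ne_zero, ENNReal.rpow_one]
  have hsecond : ∀ x, (W x ^ (-(1 / p))) ^ q = W x ^ (1 - q) := fun x => by
    rw [← ENNReal.rpow_mul]
    congr 1
    rw [one_div, ← hpq.symm.one_sub_inv]
    field_simp [hpq.symm.ne_zero]
    ring
  calc ∫⁻ x, G x ∂μ = ∫⁻ x, (W x ^ (1 / p) * G x) * W x ^ (-(1 / p)) ∂μ :=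
        lintegral_congr_ae hsplit
    _ ≤ _ := ENNReal.lintegral_mul_le_Lp_mul_Lq μ hpq
        ((hW.pow_const _).mul hG) (hW.pow_const _)
    _ = _ := by simp_rw [hfirst, hsecond]

theorem Real.sin_ne_zero_of_mem_Ioo {k : ℤ} {x : ℝ} (hx : x ∈ Ioo (k * π) ((k + 1) * π)) :
    sin x ≠ 0 := by
  rw [Ne, sin_eq_zero_iff]
  rintro ⟨n, rfl⟩
  have h₁ : k < n := by exact_mod_cast lt_of_mul_lt_mul_right hx.1 pi_pos.le
  have h₂ : n < k + 1 := by exact_mod_cast lt_of_mul_lt_mul_right hx.2 pi_pos.le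
  omega

theorem hasDerivAt_sin_sub_cos (t : ℝ) :
    HasDerivAt (fun t => sin t - cos t) (cos t + sin t) t :=
  ((hasDerivAt_sin t).sub (hasDerivAt_cos t)).congr_deriv (by ring)

theorem cos_add_sin_eq_sqrt_two_mul_sin (t : ℝ) : cos t + sin t = √2 * sin (t + π / 4) := by
  rw [sin_add, cos_pi_div_four, sin_pi_div_four]
  linear_combination (-(sin t + cos t) / 2) * Real.mul_self_sqrt (zero_le_two : (0 : ℝ) ≤ 2)

theorem injOn_sin_sub_cos (k : ℤ) :
    InjOn (fun t => sin t - cos t) (Icc (k * π - π / 4) ((k + 1) * π - π / 4)) := by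
  refine injOn_of_hasDerivAt_ne_zero (convex_Icc _ _) hasDerivAt_sin_sub_cos fun t ht => ?_
  rw [interior_Icc] at ht
  rw [cos_add_sin_eq_sqrt_two_mul_sin]
  exact mul_ne_zero (by positivity)
    (sin_ne_zero_of_mem_Ioo (k := k) ⟨by linarith [ht.1], by linarith [ht.2]⟩)

theorem ae_cos_add_sin_ne_zero : ∀ᵐ t : ℝ, cos t + sin t ≠ 0 := by
  refine ae_iff.2 (measure_mono_null (fun t ht => ?_)
    ((countable_range fun n : ℤ => n * π - π / 4).measure_zero volume))
  have h : sin (t + π / 4) = 0 := by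
    simpa [cos_add_sin_eq_sqrt_two_mul_sin] using ht
  obtain ⟨n, hn⟩ := sin_eq_zero_iff.1 h
  exact ⟨n, by linarith⟩

theorem setLIntegral_abs_cos_add_sin_mul_comp_le (H : ℝ → ℝ≥0∞) :
    ∫⁻ t in Ioc 0 (2 * π), ENNReal.ofReal |cos t + sin t| * H (sin t - cos t)
      ≤ 3 * ∫⁻ y, H y := by
  have harc (k : ℤ) {a b : ℝ} (ha : k * π - π / 4 ≤ a) (hb : b ≤ (k + 1) * π - π / 4) :
      ∫⁻ t in Ioc a b, ENNReal.ofReal |cos t + sin t| * H (sin t - cos t) ≤ ∫⁻ y, H y :=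
    setLIntegral_abs_deriv_mul_comp_le measurableSet_Ioc
      (fun t _ => (hasDerivAt_sin_sub_cos t).hasDerivWithinAt)
      ((injOn_sin_sub_cos k).mono (Ioc_subset_Icc_self.trans (Icc_subset_Icc ha hb))) H
  have hπ := pi_pos
  rw [setLIntegral_Ioc_eq_add_add _ (b := 3 * π / 4) (c := 7 * π / 4)
    (by linarith) (by linarith) (by linarith)]
  calc _ ≤ (∫⁻ y, H y) + (∫⁻ y, H y) + ∫⁻ y, H y :=
        add_le_add (add_le_add (harc 0 (by push_cast; linarith) (by push_cast; linarith))
          (harc 1 (by push_cast; linarith) (by push_cast; linarith)))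
          (harc 2 (by push_cast; linarith) (by push_cast; linarith))
    _ = 3 * ∫⁻ y, H y := by ring

theorem setLIntegral_abs_sin_rpow_lt_top {r : ℝ} (hr : -1 < r) (hr0 : r ≤ 0) :
    ∫⁻ u in Ioc 0 π, ENNReal.ofReal |sin u| ^ r < ∞ := by
  have hπ := pi_pos
  set ψ : ℝ → ℝ≥0∞ := fun v => ENNReal.ofReal (2 / π * v) ^ r
  have hψ : ∫⁻ v in Ioc 0 π, ψ v < ∞ := by
    have hint : IntegrableOn (fun v : ℝ => (2 / π) ^ r * v ^ r) (Ioc 0 π) :=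
      ((intervalIntegrable_iff_integrableOn_Ioc_of_le pi_pos.le).1
        (intervalIntegral.intervalIntegrable_rpow' hr)).const_mul _
    refine lt_of_eq_of_lt (setLIntegral_congr_fun measurableSet_Ioc fun v hv => ?_)
      hint.setLIntegral_lt_top
    have hv0 := hv.1
    change ENNReal.ofReal (2 / π * v) ^ r = _
    rw [ENNReal.ofReal_rpow_of_pos (by positivity), Real.mul_rpow (by positivity) hv.1.le]
  have hjordan : ∀ u ∈ Ioc 0 π, ENNReal.ofReal |sin u| ^ r ≤ ψ u + ψ (π - u) := by
    rintro u ⟨hu0, huπ⟩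
    rw [abs_of_nonneg (sin_nonneg_of_nonneg_of_le_pi hu0.le huπ)]
    rcases le_or_gt u (π / 2) with hu | hu
    · exact le_add_right (ENNReal.rpow_le_rpow_of_nonpos hr0
        (ENNReal.ofReal_le_ofReal (mul_le_sin hu0.le hu)))
    · refine le_add_left (ENNReal.rpow_le_rpow_of_nonpos hr0 (ENNReal.ofReal_le_ofReal ?_))
      rw [← sin_pi_sub]
      exact mul_le_sin (by linarith) (by linarith)
  have hreflect : ∫⁻ u in Ioc 0 π, ψ (π - u) = ∫⁻ v in Ioc 0 π, ψ v := by
    rw [setLIntegral_Ioc_comp_const_sub, sub_self, sub_zero]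
    exact setLIntegral_congr Ico_ae_eq_Ioc
  calc ∫⁻ u in Ioc 0 π, ENNReal.ofReal |sin u| ^ r
      ≤ ∫⁻ u in Ioc 0 π, (ψ u + ψ (π - u)) := setLIntegral_mono' measurableSet_Ioc hjordan
    _ = (∫⁻ v in Ioc 0 π, ψ v) + ∫⁻ v in Ioc 0 π, ψ v := by
        rw [lintegral_add_left (by fun_prop), hreflect]
    _ < ∞ := ENNReal.add_lt_top.2 ⟨hψ, hψ⟩

theorem setLIntegral_abs_cos_add_sin_rpow_lt_top {r : ℝ} (hr : -1 < r) (hr0 : r ≤ 0) :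
    ∫⁻ t in Ioc 0 (2 * π), ENNReal.ofReal |cos t + sin t| ^ r < ∞ := by
  have hπ := pi_pos
  set G : ℝ → ℝ≥0∞ := fun u => ENNReal.ofReal |sin u| ^ r
  have hperiod {c d : ℝ} (hd : d = π + c) (hc : ∀ u, G (u + c) = G u) :
      ∫⁻ u in Ioc c d, G u < ∞ := by
    have h := setLIntegral_Ioc_comp_add_right G 0 π c
    rw [zero_add, ← hd] at h
    simpa only [← h, hc] using setLIntegral_abs_sin_rpow_lt_top hr hr0
  have hcompare (t : ℝ) : ENNReal.ofReal |cos t + sin t| ^ r ≤ G (t + π / 4) := by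
    refine ENNReal.rpow_le_rpow_of_nonpos hr0 (ENNReal.ofReal_le_ofReal ?_)
    rw [cos_add_sin_eq_sqrt_two_mul_sin, abs_mul, abs_of_pos (sqrt_pos.2 two_pos : (0 : ℝ) < √2)]
    exact le_mul_of_one_le_left (abs_nonneg _) (one_le_sqrt.2 one_le_two)
  calc ∫⁻ t in Ioc 0 (2 * π), ENNReal.ofReal |cos t + sin t| ^ r
      ≤ ∫⁻ t in Ioc 0 (2 * π), G (t + π / 4) := lintegral_mono hcompare
    _ = ∫⁻ u in Ioc (0 + π / 4) (2 * π + π / 4), G u := setLIntegral_Ioc_comp_add_right _ _ _ _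
    _ ≤ ∫⁻ u in Ioc 0 (3 * π), G u :=
        lintegral_mono_set (Ioc_subset_Ioc (by linarith) (by linarith))
    _ = (∫⁻ u in Ioc 0 π, G u) + (∫⁻ u in Ioc π (2 * π), G u) + ∫⁻ u in Ioc (2 * π) (3 * π), G u :=
        setLIntegral_Ioc_eq_add_add _ pi_pos.le (by linarith) (by linarith)
    _ < ∞ := by
        refine ENNReal.add_lt_top.2 ⟨ENNReal.add_lt_top.2 ⟨?_, ?_⟩, ?_⟩
        · exact hperiod (add_zero π).symm (by simp)
        · exact hperiod (two_mul π) (by simp [G, sin_add_pi])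
        · exact hperiod (by ring) (by simp [G, sin_add_two_pi])

theorem setLIntegral_comp_add_sin_sub_cos_le {p q : ℝ} (hpq : p.HolderConjugate q)
    {F : ℝ → ℝ≥0∞} (hF : Measurable F) (x : ℝ) :
    ∫⁻ t in Ioc 0 (2 * π), F (x + (sin t - cos t)) ≤
      3 ^ (1 / p) * (∫⁻ t in Ioc 0 (2 * π), ENNReal.ofReal |cos t + sin t| ^ (1 - q)) ^ (1 / q) *
        (∫⁻ y, F y ^ p) ^ (1 / p) := by
  have hW0 : ∀ᵐ t ∂volume.restrict (Ioc 0 (2 * π)), ENNReal.ofReal |cos t + sin t| ≠ 0 :=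
    ae_restrict_of_ae (ae_cos_add_sin_ne_zero.mono fun t ht =>
      (ENNReal.ofReal_pos.2 (abs_pos.2 ht)).ne')
  have hweighted : ∫⁻ t in Ioc 0 (2 * π),
      ENNReal.ofReal |cos t + sin t| * F (x + (sin t - cos t)) ^ p ≤ 3 * ∫⁻ y, F y ^ p :=
    calc _ ≤ 3 * ∫⁻ y, F (x + y) ^ p :=
          setLIntegral_abs_cos_add_sin_mul_comp_le fun y => F (x + y) ^ p
      _ = 3 * ∫⁻ y, F y ^ p := by rw [lintegral_add_left_eq_self (fun y => F y ^ p) x]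
  calc _ ≤ (∫⁻ t in Ioc 0 (2 * π),
          ENNReal.ofReal |cos t + sin t| * F (x + (sin t - cos t)) ^ p) ^ (1 / p) *
        (∫⁻ t in Ioc 0 (2 * π), ENNReal.ofReal |cos t + sin t| ^ (1 - q)) ^ (1 / q) :=
        lintegral_le_weighted_Lp_mul_Lq _ hpq (by fun_prop) (by fun_prop) hW0
          (ae_of_all _ fun _ => ENNReal.ofReal_ne_top)
    _ ≤ (3 * ∫⁻ y, F y ^ p) ^ (1 / p) *
        (∫⁻ t in Ioc 0 (2 * π), ENNReal.ofReal |cos t + sin t| ^ (1 - q)) ^ (1 / q) := by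
        gcongr
        exact hpq.one_div_nonneg
    _ = _ := by
        rw [ENNReal.mul_rpow_of_nonneg _ _ hpq.one_div_nonneg]
        ring

theorem lintegral_setLIntegral_comp_sub_mul_comp_sub {G₁ G₂ : ℝ → ℝ≥0∞} (hG₁ : Measurable G₁)
    (hG₂ : Measurable G₂) {u v : ℝ → ℝ} (hu : Measurable u) (hv : Measurable v) (s : Set ℝ) :
    ∫⁻ x, ∫⁻ t in s, G₁ (x - u t) * G₂ (x - v t) =
      ∫⁻ x, (∫⁻ t in s, G₁ (x + (v t - u t))) * G₂ x := by
  have hshift (t : ℝ) :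
      ∫⁻ x, G₁ (x - u t) * G₂ (x - v t) = ∫⁻ x, G₁ (x + (v t - u t)) * G₂ x := by
    rw [← lintegral_add_right_eq_self _ (v t)]
    simp only [add_sub_cancel_right, add_sub_assoc]
  calc _ = ∫⁻ t in s, ∫⁻ x, G₁ (x - u t) * G₂ (x - v t) := lintegral_lintegral_swap (by fun_prop)
    _ = ∫⁻ t in s, ∫⁻ x, G₁ (x + (v t - u t)) * G₂ x := lintegral_congr hshift
    _ = ∫⁻ x, ∫⁻ t in s, G₁ (x + (v t - u t)) * G₂ x := lintegral_lintegral_swap (by fun_prop)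
    _ = _ := lintegral_congr fun x => lintegral_mul_const _ (by fun_prop)

theorem lintegral_T2_eq {f₁ f₂ : ℝ → ℝ} (hf₁ : Measurable f₁) (hf₂ : Measurable f₂) :
    ∫⁻ x, T2 f₁ f₂ x = (ENNReal.ofReal (2 * π))⁻¹ *
      ∫⁻ x, (∫⁻ t in Ioc 0 (2 * π), ENNReal.ofReal (f₁ (x + (sin t - cos t)))) *
        ENNReal.ofReal (f₂ x) := by
  rw [← lintegral_setLIntegral_comp_sub_mul_comp_sub hf₁.ennreal_ofReal hf₂.ennreal_ofReal
    measurable_cos measurable_sin]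
  exact lintegral_const_mul' _ _ (ENNReal.inv_ne_top.2 (ENNReal.ofReal_pos.2 two_pi_pos).ne')

theorem strong_type_on_open_segment_CP (q : ℝ) (hq : 2 < q) :
    ∃ C : ℝ, 0 < C ∧ ∀ f₁ f₂ : ℝ → ℝ, Measurable f₁ → Measurable f₂ →
      (∀ x, 0 ≤ f₁ x) → (∀ x, 0 ≤ f₂ x) →
      lpNorm 1 (T2 f₁ f₂) ≤ ENNReal.ofReal C *
        lpNorm (ENNReal.ofReal q) (fun x => ENNReal.ofReal (f₁ x)) *
        lpNorm 1 (fun x => ENNReal.ofReal (f₂ x)) := by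
  set q' := q.conjExponent
  have hqq' : q.HolderConjugate q' := .conjExponent (by linarith)
  set I : ℝ≥0∞ := ∫⁻ t in Ioc 0 (2 * π), ENNReal.ofReal |cos t + sin t| ^ (1 - q')
  have hI : I < ∞ := by
    have hq'2 : q' < 2 := by
      rw [hqq'.conjugate_eq, div_lt_iff₀ (by linarith)]
      linarith
    exact setLIntegral_abs_cos_add_sin_rpow_lt_top (by linarith) (by linarith [hqq'.symm.lt])
  set D : ℝ≥0∞ := (ENNReal.ofReal (2 * π))⁻¹ * (3 ^ (1 / q) * I ^ (1 / q'))
  have hD : D ≠ ∞ :=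
    ENNReal.mul_ne_top (ENNReal.inv_ne_top.2 (ENNReal.ofReal_pos.2 two_pi_pos).ne')
      (ENNReal.mul_ne_top (ENNReal.rpow_ne_top_of_nonneg (by positivity) ENNReal.ofNat_ne_top)
        (ENNReal.rpow_ne_top_of_nonneg hqq'.symm.one_div_nonneg hI.ne))
  refine ⟨max D.toReal 1, lt_max_of_lt_right one_pos, fun f₁ f₂ hf₁ hf₂ _ _ => ?_⟩
  rw [lpNorm_one_eq_lintegral, lpNorm_one_eq_lintegral,
    lpNorm_ofReal_eq_lintegral_rpow (by linarith), lintegral_T2_eq hf₁ hf₂]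
  set N₁ := (∫⁻ y, ENNReal.ofReal (f₁ y) ^ q) ^ (1 / q)
  calc _ ≤ (ENNReal.ofReal (2 * π))⁻¹ *
        ∫⁻ x, (3 ^ (1 / q) * I ^ (1 / q') * N₁) * ENNReal.ofReal (f₂ x) := by
        gcongr with x
        exact setLIntegral_comp_add_sin_sub_cos_le hqq' hf₁.ennreal_ofReal x
    _ = D * N₁ * ∫⁻ x, ENNReal.ofReal (f₂ x) := by
        rw [lintegral_const_mul _ hf₂.ennreal_ofReal]
        ring
    _ ≤ _ := by
        gcongr
        exact (ENNReal.ofReal_toReal hD).symm.le.trans (ENNReal.ofReal_le_ofReal (le_max_left _ _))
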